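/- arXiv:1804.03192 — 6 statements merged into one kernel-verified Lean document; each statement's English description precedes it below -/
import Mathlib

section
/- Let p = 2k+1 be an odd prime and let f : Z/pZ → Z be the centered unwrapping map sending x + pZ to the unique representative x ∈ (−p/2, p/2]. Then f is injective and the probability over uniform independent x, y ∈ Z/pZ that f(x+y) = f(x) + f(y) equals (3k² + 3k + 1)/(4k² + 4k + 1), which is strictly greater than 3/4. -/
open Finset

lemma uniq7 (k : ℕ) {a b : ℤ} (ha1 : -(k:ℤ) ≤ a) (ha2 : a ≤ k) (hb1 : -(k:ℤ) ≤ b)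
    (hb2 : b ≤ k) (h : (a : ZMod (2*k+1)) = (b : ZMod (2*k+1))) : a = b := by
  rw [ZMod.intCast_eq_intCast_iff] at h
  have hd : ((2*k+1 : ℕ) : ℤ) ∣ b - a := h.dvd
  have habs : |b - a| < ((2*k+1 : ℕ) : ℤ) := by
    rw [abs_sub_lt_iff]; push_cast; omega
  have : b - a = 0 := Int.eq_zero_of_abs_lt_dvd hd habs
  omega

lemma sum7 (k : ℕ) :
    ∑ i ∈ Finset.range (2*k+1), (2*k+1 - ((i:ℤ) - k).natAbs) = 3*k^2+3*k+1 := by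
  induction k with
  | zero => simp
  | succ n ih =>
    have h1 : 2*(n+1)+1 = (2*n+1) + 1 + 1 := by ring
    rw [h1, Finset.sum_range_succ, Finset.sum_range_succ']
    push_cast
    have key : ∑ x ∈ Finset.range (2*n+1), (2*n+1+1+1 - ((x:ℤ) + 1 - ((n:ℤ) + 1)).natAbs)
        = ∑ i ∈ Finset.range (2*n+1), ((2*n+1 - ((i:ℤ) - n).natAbs) + 2) := by
      apply Finset.sum_congr rfl
      intro i hi
      simp only [Finset.mem_range] at hi
      omega
    rw [key, Finset.sum_add_distrib, ih, Finset.sum_const, Finset.card_range, smul_eq_mul]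
    have e0 : ((0:ℤ) - ((n:ℤ) + 1)).natAbs = n+1 := by omega
    have e1 : ((2*(n:ℤ) + 2 - ((n:ℤ) + 1))).natAbs = n+1 := by omega
    rw [e0, e1]
    have hsq : 3*(n+1)^2 + 3*(n+1) + 1 = 3*n^2 + 9*n + 7 := by ring
    rw [hsq]
    generalize 3*n^2 = m at *
    omega

theorem stmt_7 (k : ℕ) (hp : (2 * k + 1).Prime)
    (f : ZMod (2 * k + 1) → ℤ)
    (hf : ∀ x : ZMod (2 * k + 1), (-(k : ℤ) ≤ f x ∧ f x ≤ (k : ℤ)) ∧ ((f x : ZMod (2 * k + 1)) = x)) :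
    Function.Injective f ∧
    (Nat.card {xy : ZMod (2 * k + 1) × ZMod (2 * k + 1) //
        f (xy.1 + xy.2) = f xy.1 + f xy.2} : ℝ) / ((2 * k + 1 : ℝ)) ^ 2
      = (3 * (k : ℝ) ^ 2 + 3 * k + 1) / (4 * (k : ℝ) ^ 2 + 4 * k + 1) ∧
    (3 / 4 : ℝ) < (3 * (k : ℝ) ^ 2 + 3 * k + 1) / (4 * (k : ℝ) ^ 2 + 4 * k + 1) := by
  classical
  haveI : NeZero (2*k+1) := ⟨by omega⟩
  have hinj : Function.Injective f := by
    intro x y hxy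
    have := (hf x).2
    rw [hxy, (hf y).2] at this
    exact this.symm
  refine ⟨hinj, ?_, ?_⟩
  · -- counting
    have hcard : Nat.card {xy : ZMod (2*k+1) × ZMod (2*k+1) //
        f (xy.1 + xy.2) = f xy.1 + f xy.2}
        = (Finset.univ.filter (fun xy : ZMod (2*k+1) × ZMod (2*k+1) =>
            f (xy.1 + xy.2) = f xy.1 + f xy.2)).card := by
      rw [Nat.card_eq_fintype_card, Fintype.card_subtype]
    have hbij : (Finset.univ.filter (fun xy : ZMod (2*k+1) × ZMod (2*k+1) =>
            f (xy.1 + xy.2) = f xy.1 + f xy.2)).card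
        = ((Finset.Icc (-(k:ℤ)) k ×ˢ Finset.Icc (-(k:ℤ)) k).filter
            (fun ab => -(k:ℤ) ≤ ab.1 + ab.2 ∧ ab.1 + ab.2 ≤ (k:ℤ))).card := by
      apply Finset.card_nbij (fun xy => (f xy.1, f xy.2))
      · intro xy hxy
        simp only [Finset.mem_coe, Finset.mem_filter, Finset.mem_univ, true_and] at hxy
        simp only [Finset.mem_coe, Finset.mem_filter, Finset.mem_product, Finset.mem_Icc]
        refine ⟨⟨⟨(hf xy.1).1.1, (hf xy.1).1.2⟩, ⟨(hf xy.2).1.1, (hf xy.2).1.2⟩⟩, ?_, ?_⟩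
        · rw [← hxy]; exact (hf _).1.1
        · rw [← hxy]; exact (hf _).1.2
      · intro a _ b _ hab
        simp only [Prod.mk.injEq] at hab
        exact Prod.ext (hinj hab.1) (hinj hab.2)
      · rintro ⟨a, b⟩ hab
        simp only [Finset.coe_filter, Finset.mem_product, Finset.mem_Icc,
          Set.mem_setOf_eq] at hab
        obtain ⟨⟨⟨ha1, ha2⟩, ⟨hb1, hb2⟩⟩, hs1, hs2⟩ := hab
        have hfa : f (a : ZMod (2*k+1)) = a := by
          apply uniq7 k (hf _).1.1 (hf _).1.2 ha1 ha2
          rw [(hf _).2]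
        have hfb : f (b : ZMod (2*k+1)) = b := by
          apply uniq7 k (hf _).1.1 (hf _).1.2 hb1 hb2
          rw [(hf _).2]
        have hfs : f ((a : ZMod (2*k+1)) + (b : ZMod (2*k+1))) = a + b := by
          apply uniq7 k (hf _).1.1 (hf _).1.2 hs1 hs2
          rw [(hf _).2]; push_cast; ring
        refine ⟨((a : ZMod (2*k+1)), (b : ZMod (2*k+1))), ?_, ?_⟩
        · simp only [Finset.coe_filter, Finset.mem_univ, true_and, Set.mem_setOf_eq]
          rw [hfa, hfb, hfs]
        · simp only [Prod.mk.injEq]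
          exact ⟨hfa, hfb⟩
    have hTcard : ((Finset.Icc (-(k:ℤ)) k ×ˢ Finset.Icc (-(k:ℤ)) k).filter
            (fun ab => -(k:ℤ) ≤ ab.1 + ab.2 ∧ ab.1 + ab.2 ≤ (k:ℤ))).card = 3*k^2+3*k+1 := by
      rw [Finset.card_filter, Finset.sum_product]
      have inner : ∀ a ∈ Finset.Icc (-(k:ℤ)) k,
          (∑ b ∈ Finset.Icc (-(k:ℤ)) k,
            if -(k:ℤ) ≤ a + b ∧ a + b ≤ (k:ℤ) then 1 else 0)
          = 2*k+1 - a.natAbs := by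
        intro a ha
        simp only [Finset.mem_Icc] at ha
        rw [← Finset.card_filter]
        have hfe : (Finset.Icc (-(k:ℤ)) k).filter (fun b => -(k:ℤ) ≤ a + b ∧ a + b ≤ k)
            = Finset.Icc (max (-(k:ℤ)) (-(k:ℤ)-a)) (min (k:ℤ) (k-a)) := by
          ext b
          simp only [Finset.mem_filter, Finset.mem_Icc, le_min_iff, max_le_iff]
          omega
        rw [hfe, Int.card_Icc]
        rcases le_total 0 a with h|h
        · rw [max_eq_left (by omega), min_eq_right (by omega)]
          omega
        · rw [max_eq_right (by omega), min_eq_left (by omega)]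
          omega
      rw [Finset.sum_congr rfl inner]
      refine Eq.trans (Finset.sum_nbij' (fun a => (a + k).toNat) (fun i => (i:ℤ) - k)
        ?_ ?_ ?_ ?_ ?_) (sum7 k)
      · intro a ha
        simp only [Finset.mem_Icc] at ha
        simp only [Finset.mem_range]
        omega
      · intro i hi
        simp only [Finset.mem_range] at hi
        simp only [Finset.mem_Icc]
        omega
      · intro a ha
        simp only [Finset.mem_Icc] at ha
        omega
      · intro i hi
        simp only [Finset.mem_range] at hi
        omega
      · intro a ha
        simp only [Finset.mem_Icc] at ha
        omega
    rw [hcard, hbij, hTcard]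
    have h4 : (4 * (k : ℝ) ^ 2 + 4 * k + 1) = ((2:ℝ)*k+1)^2 := by ring
    rw [h4]
    push_cast
    congr 1 <;> ring
  · rw [div_lt_div_iff₀ (by norm_num) (by positivity)]
    nlinarith [sq_nonneg (k:ℝ)]
end

section
/- Let G and H be Abelian groups, let Γ ⊆ G × H be a finite set on which both coordinate projections are injective, let r ∈ N, and suppose K_{H,r} and r·G are finite. Then for all subsets X, B ⊆ Γ with X nonempty, |X + r·B| / |X| ≥ |B| / (|K_{H,r}| |r·G|). -/
open Pointwise

theorem stmt_12 (G H : Type*) [AddCommGroup G] [AddCommGroup H]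
    (Γ : Set (G × H)) (hΓfin : Γ.Finite)
    (hfst : Set.InjOn Prod.fst Γ) (hsnd : Set.InjOn Prod.snd Γ)
    (r : ℕ)
    (hKH : ({h : H | r • h = 0}).Finite)
    (hrG : (Set.range (fun g : G => r • g)).Finite)
    (X B : Set (G × H)) (hX : X ⊆ Γ) (hB : B ⊆ Γ) (hXne : X.Nonempty) :
    (Nat.card B : ℝ) / ((Nat.card {h : H | r • h = 0} : ℝ) *
        (Nat.card (Set.range (fun g : G => r • g)) : ℝ))
      ≤ (Nat.card (X + (fun p : G × H => r • p) '' B) : ℝ) / (Nat.card X : ℝ) := by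
  classical
  have hXfin : X.Finite := hΓfin.subset hX
  have hBfin : B.Finite := hΓfin.subset hB
  have hSfin : (X + (fun p : G × H => r • p) '' B).Finite := hXfin.add (hBfin.image _)
  set Xf := hXfin.toFinset with hXfdef
  set Bf := hBfin.toFinset with hBfdef
  set Sf := hSfin.toFinset with hSfdef
  set Kf := hKH.toFinset with hKfdef
  set Rf := hrG.toFinset with hRfdef
  -- choose the largest fiber of b ↦ r • b.1
  obtain ⟨g, hgmax⟩ : ∃ g : G, ∀ g' ∈ Bf.image (fun b : G × H => r • b.1),
      (Bf.filter (fun b => r • b.1 = g')).card ≤ (Bf.filter (fun b => r • b.1 = g)).card := by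
    rcases (Bf.image (fun b : G × H => r • b.1)).eq_empty_or_nonempty with he | hne
    · refine ⟨0, fun g' hg' => ?_⟩
      rw [he] at hg'
      exact absurd hg' (Finset.notMem_empty _)
    · set F : G → ℕ := fun y => (Bf.filter (fun b => r • b.1 = y)).card with hF
      obtain ⟨g, -, hg⟩ := Finset.exists_max_image _ F hne
      exact ⟨g, hg⟩
  set Bg := Bf.filter (fun b => r • b.1 = g) with hBgdef
  -- Lemma A : Bf.card ≤ Rf.card * Bg.card
  have hA : Bf.card ≤ Rf.card * Bg.card := by
    have h1 : Bf.card = ∑ g' ∈ Bf.image (fun b : G × H => r • b.1),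
        (Bf.filter (fun b => r • b.1 = g')).card :=
      Finset.card_eq_sum_card_fiberwise (fun b hb => Finset.mem_image_of_mem _ hb)
    have h2 : ∑ g' ∈ Bf.image (fun b : G × H => r • b.1),
        (Bf.filter (fun b => r • b.1 = g')).card
        ≤ (Bf.image (fun b : G × H => r • b.1)).card * Bg.card := by
      simpa using Finset.sum_le_card_nsmul _ _ _ (fun x hx => hgmax x hx)
    have h3 : (Bf.image (fun b : G × H => r • b.1)).card ≤ Rf.card := by
      apply Finset.card_le_card
      intro y hy
      simp only [Finset.mem_image, hBfdef, Set.Finite.mem_toFinset] at hy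
      obtain ⟨b, -, rfl⟩ := hy
      simp only [hRfdef, Set.Finite.mem_toFinset]
      exact ⟨b.1, rfl⟩
    calc Bf.card = _ := h1
      _ ≤ _ := h2
      _ ≤ Rf.card * Bg.card := Nat.mul_le_mul_right _ h3
  -- Lemma B : Xf.card * Bg.card ≤ Kf.card * Sf.card
  have hB2 : Xf.card * Bg.card ≤ Kf.card * Sf.card := by
    have hmaps : ∀ p ∈ Xf ×ˢ Bg, (fun p : (G × H) × (G × H) => p.1 + r • p.2) p ∈ Sf := by
      rintro ⟨x, b⟩ hp
      simp only [Finset.mem_product, hBgdef, Finset.mem_filter, hXfdef, hBfdef,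
        Set.Finite.mem_toFinset] at hp
      simp only [hSfdef, Set.Finite.mem_toFinset]
      exact Set.add_mem_add hp.1 (Set.mem_image_of_mem _ hp.2.1)
    have hfiber : ∀ t ∈ Sf,
        ((Xf ×ˢ Bg).filter
          (fun p : (G × H) × (G × H) => p.1 + r • p.2 = t)).card ≤ Kf.card := by
      intro t ht
      set F := (Xf ×ˢ Bg).filter (fun p : (G × H) × (G × H) => p.1 + r • p.2 = t) with hF
      rcases F.eq_empty_or_nonempty with he | ⟨p0, hp0⟩
      · simp [he]
      have hmem : ∀ p ∈ F, p.1 ∈ X ∧ p.2 ∈ B ∧ r • p.2.1 = g ∧ p.1 + r • p.2 = t := by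
        intro p hp
        simp only [hF, Finset.mem_filter, Finset.mem_product, hBgdef, hXfdef, hBfdef,
          Set.Finite.mem_toFinset, Finset.mem_filter] at hp
        exact ⟨hp.1.1, hp.1.2.1, hp.1.2.2, hp.2⟩
      -- every element of the fiber has the same first component
      have hsame : ∀ p ∈ F, p.1 = p0.1 := by
        intro p hp
        obtain ⟨hpX, hpB, hpg, hpt⟩ := hmem p hp
        obtain ⟨hp0X, hp0B, hp0g, hp0t⟩ := hmem p0 hp0
        have h1 : p.1.1 + r • p.2.1 = p0.1.1 + r • p0.2.1 := by
          have := congrArg Prod.fst (hpt.trans hp0t.symm)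
          simpa using this
        rw [hpg, hp0g] at h1
        have : p.1.1 = p0.1.1 := by
          exact add_right_cancel h1
        exact hfst (hX hpX) (hX hp0X) this
      apply Finset.card_le_card_of_injOn (fun p => p.2.2 - p0.2.2)
      · intro p hp
        obtain ⟨hpX, hpB, hpg, hpt⟩ := hmem p hp
        obtain ⟨hp0X, hp0B, hp0g, hp0t⟩ := hmem p0 hp0
        have h1 : p.1.2 + r • p.2.2 = p0.1.2 + r • p0.2.2 := by
          have := congrArg Prod.snd (hpt.trans hp0t.symm)
          simpa using this
        rw [hsame p hp] at h1
        have h2 : r • p.2.2 = r • p0.2.2 := add_left_cancel h1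
        simp only [hKfdef, Finset.mem_coe, Set.Finite.mem_toFinset, Set.mem_setOf_eq, smul_sub, h2,
          sub_self]
      · intro p hp q hq hpq
        obtain ⟨hpX, hpB, -, -⟩ := hmem p hp
        obtain ⟨hqX, hqB, -, -⟩ := hmem q hq
        have h2 : p.2.2 = q.2.2 := by
          have := sub_left_injective hpq
          exact this
        have h22 : p.2 = q.2 := hsnd (hB hpB) (hB hqB) h2
        have h11 : p.1 = q.1 := (hsame p hp).trans (hsame q hq).symm
        exact Prod.ext h11 h22
    have := Finset.card_le_mul_card_image_of_maps_to hmaps Kf.card hfiber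
    simpa [Finset.card_product, mul_comm] using this
  -- combine
  have key : Bf.card * Xf.card ≤ (Kf.card * Rf.card) * Sf.card := by
    calc Bf.card * Xf.card ≤ (Rf.card * Bg.card) * Xf.card := Nat.mul_le_mul_right _ hA
      _ = Rf.card * (Xf.card * Bg.card) := by ring
      _ ≤ Rf.card * (Kf.card * Sf.card) := Nat.mul_le_mul_left _ hB2
      _ = (Kf.card * Rf.card) * Sf.card := by ring
  -- positivity facts
  obtain ⟨x0, hx0⟩ := hXne
  have hXpos : 0 < Xf.card :=
    Finset.card_pos.mpr ⟨x0, by simp [hXfdef, Set.Finite.mem_toFinset, hx0]⟩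
  have hKpos : 0 < Kf.card :=
    Finset.card_pos.mpr ⟨0, by simp [hKfdef, Set.Finite.mem_toFinset]⟩
  have hRpos : 0 < Rf.card :=
    Finset.card_pos.mpr ⟨r • x0.1, by
      simp only [hRfdef, Set.Finite.mem_toFinset]; exact ⟨x0.1, rfl⟩⟩
  -- rewrite Nat.card to Finset cards
  have eB : Nat.card B = Bf.card := by
    rw [Nat.card_coe_set_eq, Set.ncard_eq_toFinset_card _ hBfin]
  have eX : Nat.card X = Xf.card := by
    rw [Nat.card_coe_set_eq, Set.ncard_eq_toFinset_card _ hXfin]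
  have eS : Nat.card (X + (fun p : G × H => r • p) '' B) = Sf.card := by
    rw [Nat.card_coe_set_eq, Set.ncard_eq_toFinset_card _ hSfin]
  have eK : Nat.card {h : H | r • h = 0} = Kf.card := by
    rw [Nat.card_coe_set_eq, Set.ncard_eq_toFinset_card _ hKH]
  have eR : Nat.card (Set.range (fun g : G => r • g)) = Rf.card := by
    rw [Nat.card_coe_set_eq, Set.ncard_eq_toFinset_card _ hrG]
  rw [eB, eX, eS, eK, eR]
  rw [div_le_div_iff₀ (by positivity) (by exact_mod_cast hXpos)]
  have : (Bf.card * Xf.card : ℝ) ≤ ((Kf.card * Rf.card) * Sf.card : ℕ) := by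
    exact_mod_cast key
  push_cast at this ⊢
  nlinarith [this]
end

section
/- Let G be an Abelian group, r ∈ N a parameter, and Y ⊆ A ⊆ G finite sets with |Y − A − 2·A| ≤ K|Y|. Then for every finite X ⊆ G, |X + r·A| ≤ K^{⌊log₂ r⌋} |X + A|. -/
open Pointwise

namespace Stmt15Aux

variable {G : Type*} [AddCommGroup G] [DecidableEq G]

/-- Dilate of a finset. -/
def dil (r : ℕ) (A : Finset G) : Finset G := A.image (fun a => r • a)

lemma dil_one (A : Finset G) : dil 1 A = A := by
  simp [dil]

lemma dil_dil (s : ℕ) (A : Finset G) : dil s (dil 2 A) = dil (2 * s) A := by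
  unfold dil
  rw [Finset.image_image]
  apply Finset.image_congr
  intro a _
  show s • (2 • a) = (2 * s) • a
  rw [← mul_smul, Nat.mul_comm]

lemma mem_dil {r : ℕ} {A : Finset G} {a : G} (ha : a ∈ A) : r • a ∈ dil r A :=
  Finset.mem_image_of_mem _ ha

/-- Counting helper: summing, over thresholds `t`, the number of fibers of `f` on `S`
of size at least `t`, gives `#S`. -/
lemma sum_levels {α β : Type*} [DecidableEq β] (S : Finset α) (f : α → β) (M : ℕ)
    (hM : S.card ≤ M) :
    ∑ t ∈ Finset.Icc 1 M,
      ((S.image f).filter (fun z => t ≤ (S.filter (fun x => f x = z)).card)).card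
      = S.card := by
  rw [Finset.sum_congr rfl (fun t _ => Finset.card_filter
    (fun z => t ≤ (S.filter (fun x => f x = z)).card) (S.image f))]
  rw [Finset.sum_comm]
  have hinner : ∀ z ∈ S.image f,
      (∑ t ∈ Finset.Icc 1 M, if t ≤ (S.filter (fun x => f x = z)).card then 1 else 0)
        = (S.filter (fun x => f x = z)).card := by
    intro z _
    rw [← Finset.card_filter]
    have hle : (S.filter (fun x => f x = z)).card ≤ M :=
      le_trans (Finset.card_filter_le _ _) hM
    have : (Finset.Icc 1 M).filter (fun t => t ≤ (S.filter (fun x => f x = z)).card)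
        = Finset.Icc 1 ((S.filter (fun x => f x = z)).card) := by
      ext t
      simp only [Finset.mem_filter, Finset.mem_Icc]
      omega
    rw [this, Nat.card_Icc]
    omega
  rw [Finset.sum_congr rfl hinner]
  exact (Finset.card_eq_sum_card_fiberwise (fun x hx => Finset.mem_image_of_mem f hx)).symm

/-- Descent lemma: a small-sumset hypothesis pushes forward through an additive
homomorphism, replacing `Y` by a fiber-rich subset of its image. -/
lemma descent (Y B₀ : Finset G) (hY : Y.Nonempty) (K : ℝ)
    (h : ((Y + B₀).card : ℝ) ≤ K * Y.card) (f : G →+ G) :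
    ∃ Y' : Finset G, Y' ⊆ Y.image f ∧ Y'.Nonempty ∧
      ((Y' + B₀.image f).card : ℝ) ≤ K * Y'.card := by
  by_contra hcon
  push_neg at hcon
  set m : G → ℕ := fun z => (Y.filter (fun y => f y = z)).card with hm
  set n : G → ℕ := fun z => ((Y + B₀).filter (fun w => f w = z)).card with hn
  set M : ℕ := max Y.card (Y + B₀).card with hM
  set Yt : ℕ → Finset G := fun t => (Y.image f).filter (fun z => t ≤ m z) with hYt
  set Zt : ℕ → Finset G := fun t => ((Y + B₀).image f).filter (fun z => t ≤ n z) with hZt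
  -- each level of Y, translated by image of B₀, lands in the corresponding level of Y + B₀
  have hsubZ : ∀ t, 1 ≤ t → Yt t + B₀.image f ⊆ Zt t := by
    intro t ht c hc
    rw [Finset.mem_add] at hc
    obtain ⟨z, hz, w, hw, rfl⟩ := hc
    rw [hYt, Finset.mem_filter] at hz
    obtain ⟨hz1, hz2⟩ := hz
    rw [Finset.mem_image] at hw
    obtain ⟨b, hb, rfl⟩ := hw
    have hmn : m z ≤ n (z + f b) := by
      apply Finset.card_le_card_of_injOn (fun y => y + b)
      · intro y hy
        simp only [Finset.mem_coe, Finset.mem_filter] at hy ⊢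
        refine ⟨Finset.add_mem_add hy.1 hb, ?_⟩
        rw [map_add, hy.2]
      · intro y₁ _ y₂ _ hEq
        exact add_left_injective b hEq
    rw [hZt, Finset.mem_filter]
    constructor
    · -- z + f b ∈ (Y + B₀).image f
      have hz0 : 0 < m z := lt_of_lt_of_le ht hz2
      rw [hm] at hz0
      rw [Finset.card_pos] at hz0
      obtain ⟨y₀, hy₀⟩ := hz0
      rw [Finset.mem_filter] at hy₀
      rw [Finset.mem_image]
      exact ⟨y₀ + b, Finset.add_mem_add hy₀.1 hb, by rw [map_add, hy₀.2]⟩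
    · exact le_trans hz2 hmn
  have hYpos : (0 : ℝ) < Y.card := by exact_mod_cast hY.card_pos
  have hsum1 : ∑ t ∈ Finset.Icc 1 M, (Yt t).card = Y.card :=
    sum_levels Y f M (le_max_left _ _)
  have hsum2 : ∑ t ∈ Finset.Icc 1 M, (Zt t).card = (Y + B₀).card :=
    sum_levels (Y + B₀) f M (le_max_right _ _)
  have h1M : 1 ∈ Finset.Icc 1 M := by
    rw [Finset.mem_Icc]
    refine ⟨le_refl _, le_max_of_le_left ?_⟩
    exact hY.card_pos
  have hY1ne : (Yt 1).Nonempty := by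
    obtain ⟨y₀, hy₀⟩ := hY
    refine ⟨f y₀, ?_⟩
    rw [hYt, Finset.mem_filter]
    refine ⟨Finset.mem_image_of_mem f hy₀, ?_⟩
    exact Finset.card_pos.2 ⟨y₀, Finset.mem_filter.2 ⟨hy₀, rfl⟩⟩
  -- strict inequality via the contradiction hypothesis
  have hlt : K * (Y.card : ℝ) < ∑ t ∈ Finset.Icc 1 M, ((Yt t + B₀.image f).card : ℝ) := by
    have : K * (Y.card : ℝ) = ∑ t ∈ Finset.Icc 1 M, K * ((Yt t).card : ℝ) := by
      rw [← Finset.mul_sum]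
      congr 1
      exact_mod_cast congrArg (Nat.cast (R := ℝ)) hsum1.symm
    rw [this]
    apply Finset.sum_lt_sum
    · intro i _
      rcases (Yt i).eq_empty_or_nonempty with hE | hne
      · simp [hE]
      · exact le_of_lt (hcon _ (Finset.filter_subset _ _) hne)
    · exact ⟨1, h1M, hcon _ (Finset.filter_subset _ _) hY1ne⟩
  have hle2 : ∑ t ∈ Finset.Icc 1 M, ((Yt t + B₀.image f).card : ℝ)
      ≤ ∑ t ∈ Finset.Icc 1 M, ((Zt t).card : ℝ) := by
    apply Finset.sum_le_sum
    intro t ht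
    rw [Finset.mem_Icc] at ht
    exact_mod_cast Finset.card_le_card (hsubZ t ht.1)
  have hle3 : ∑ t ∈ Finset.Icc 1 M, ((Zt t).card : ℝ) = ((Y + B₀).card : ℝ) := by
    exact_mod_cast congrArg (Nat.cast (R := ℝ)) hsum2
  have : K * (Y.card : ℝ) < K * Y.card := by
    calc K * (Y.card : ℝ) < ∑ t ∈ Finset.Icc 1 M, ((Yt t + B₀.image f).card : ℝ) := hlt
      _ ≤ ∑ t ∈ Finset.Icc 1 M, ((Zt t).card : ℝ) := hle2
      _ = ((Y + B₀).card : ℝ) := hle3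
      _ ≤ K * Y.card := h
  exact lt_irrefl _ this

/-- Ruzsa triangle consequence: `|X + A + 2·A| ≤ K |X + A|`. -/
lemma key (A Y : Finset G) (hYA : Y ⊆ A) (hY : Y.Nonempty) (K : ℝ)
    (hK : ((Y - A - dil 2 A).card : ℝ) ≤ K * Y.card) (X : Finset G) :
    ((X + A + dil 2 A).card : ℝ) ≤ K * (X + A).card := by
  have tri := Finset.ruzsa_triangle_inequality_add_sub_add (A + dil 2 A) Y X
  -- tri : #Y * #((A + dil 2 A) + X) ≤ #(Y - (A + dil 2 A)) * #(Y + X)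
  rw [sub_sub] at hK
  have hrw : (A + dil 2 A) + X = X + A + dil 2 A := by
    rw [add_comm, ← add_assoc]
  rw [hrw] at tri
  have hYpos : (0 : ℝ) < Y.card := by exact_mod_cast hY.card_pos
  have hsub : ((Y + X).card : ℝ) ≤ ((X + A).card : ℝ) := by
    have : Y + X ⊆ X + A := by
      rw [add_comm]
      exact Finset.add_subset_add_left hYA
    exact_mod_cast Finset.card_le_card this
  have hK0 : (0 : ℝ) ≤ K * Y.card := le_trans (by positivity) hK
  have tri' : ((Y.card : ℝ)) * ((X + A + dil 2 A).card : ℝ)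
      ≤ ((Y - (A + dil 2 A)).card : ℝ) * ((Y + X).card : ℝ) := by exact_mod_cast tri
  have chain : ((Y.card : ℝ)) * ((X + A + dil 2 A).card : ℝ)
      ≤ (Y.card : ℝ) * (K * (X + A).card) := by
    calc ((Y.card : ℝ)) * ((X + A + dil 2 A).card : ℝ)
        ≤ ((Y - (A + dil 2 A)).card : ℝ) * ((Y + X).card : ℝ) := tri'
      _ ≤ (K * Y.card) * ((X + A).card : ℝ) := by
          apply mul_le_mul hK hsub (by positivity) hK0
      _ = (Y.card : ℝ) * (K * (X + A).card) := by ring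
  exact le_of_mul_le_mul_left chain hYpos

/-- Main lemma, Finset form, by strong induction on `r`. -/
lemma main (r : ℕ) : ∀ (A Y : Finset G), Y ⊆ A → Y.Nonempty →
    ∀ K : ℝ, ((Y - A - dil 2 A).card : ℝ) ≤ K * Y.card → 0 < r →
    ∀ X : Finset G, ((X + dil r A).card : ℝ) ≤ K ^ (Nat.log 2 r) * (X + A).card := by
  induction r using Nat.strong_induction_on with
  | _ r ih =>
    intro A Y hYA hY K hK hr X
    have hYpos : (0 : ℝ) < Y.card := by exact_mod_cast hY.card_pos
    have hK0 : (0 : ℝ) ≤ K := by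
      have h1 : (0 : ℝ) ≤ K * Y.card := le_trans (by positivity) hK
      nlinarith
    rcases eq_or_lt_of_le (Nat.one_le_iff_ne_zero.2 (Nat.pos_iff_ne_zero.1 hr)) with h1 | h2
    · -- r = 1
      rw [← h1, dil_one]
      simp
    · -- r ≥ 2
      have h2r : 2 ≤ r := h2
      set s : ℕ := r / 2 with hs
      have hs1 : 0 < s := Nat.div_pos h2r (by norm_num)
      have hsr : s < r := Nat.div_lt_self hr (by norm_num)
      have hlog : Nat.log 2 r = Nat.log 2 s + 1 := by
        have h1 := Nat.log_div_base 2 r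
        have h2' : 0 < Nat.log 2 r := Nat.log_pos (by norm_num) h2r
        rw [hs]
        omega
      -- the doubling homomorphism
      set f : G →+ G := AddMonoidHom.mk' (fun a => (2 : ℕ) • a) (fun a b => smul_add 2 a b)
        with hf
      have hfapp : ∀ a : G, f a = (2 : ℕ) • a := fun a => rfl
      set B : Finset G := dil 2 A with hB
      have hAB : A.image f = B := by
        rw [hB]
        rfl
      set B₀ : Finset G := -A - dil 2 A with hB₀
      have hYB₀ : Y + B₀ = Y - A - dil 2 A := by
        rw [hB₀, sub_eq_add_neg (-A), ← add_assoc, ← sub_eq_add_neg, ← sub_eq_add_neg]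
      have hKB₀ : ((Y + B₀).card : ℝ) ≤ K * Y.card := by rw [hYB₀]; exact hK
      obtain ⟨Y', hY'sub, hY'ne, hY'bound⟩ := descent Y B₀ hY K hKB₀ f
      -- identify the pushed-forward hypothesis set
      have himg : B₀.image f = -B - dil 2 B := by
        rw [hB₀, sub_eq_add_neg, Finset.image_add f, Finset.image_neg f, Finset.image_neg f,
          hAB]
        have : (dil 2 A).image f = dil 2 B := by
          rw [← hAB]
          unfold dil
          rw [Finset.image_image, Finset.image_image]
          apply Finset.image_congr
          intro a _
          show f (2 • a) = 2 • (f a)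
          rw [map_nsmul]
        rw [this, ← sub_eq_add_neg]
      have hY'bound' : ((Y' - B - dil 2 B).card : ℝ) ≤ K * Y'.card := by
        have : Y' - B - dil 2 B = Y' + B₀.image f := by
          rw [himg, sub_eq_add_neg (-B), ← add_assoc, ← sub_eq_add_neg, ← sub_eq_add_neg]
        rw [this]
        exact hY'bound
      have hY'B : Y' ⊆ B := by
        refine le_trans hY'sub ?_
        rw [← hAB]
        exact Finset.image_subset_image hYA
      -- induction hypothesis applied to (B, Y') at parameter s
      have ihs := ih s hsr B Y' hY'B hY'ne K hY'bound' hs1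
      have hAne : A.Nonempty := hY.mono hYA
      -- Step: #(X + dil r A) ≤ #(X + A + dil s B)
      have hstep : (X + dil r A).card ≤ (X + A + dil s B).card := by
        rcases Nat.even_or_odd r with he | ho
        · -- r = 2 * s
          have hr2 : r = 2 * s := by
            obtain ⟨k, hk⟩ := he
            omega
          have : X + dil r A + A = X + A + dil s B := by
            rw [hB, dil_dil, ← hr2, add_right_comm]
          rw [← this]
          exact Finset.card_le_card_add_right hAne
        · -- r = 2 * s + 1
          have hr2 : r = 2 * s + 1 := by
            obtain ⟨k, hk⟩ := ho
            omega
          apply Finset.card_le_card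
          have hdsub : dil r A ⊆ A + dil s B := by
            intro z hz
            rw [dil] at hz
            rw [Finset.mem_image] at hz
            obtain ⟨a, ha, rfl⟩ := hz
            rw [Finset.mem_add]
            refine ⟨a, ha, s • ((2 : ℕ) • a), mem_dil (mem_dil ha), ?_⟩
            rw [← mul_smul, hr2]
            rw [add_comm a]
            rw [← succ_nsmul]
            congr 1
            omega
          calc X + dil r A ⊆ X + (A + dil s B) := Finset.add_subset_add_left hdsub
            _ = X + A + dil s B := by rw [add_assoc]
      -- chain everything
      have c1 : ((X + dil r A).card : ℝ) ≤ ((X + A + dil s B).card : ℝ) := by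
        exact_mod_cast hstep
      have c2 : ((X + A + dil s B).card : ℝ) ≤ K ^ (Nat.log 2 s) * ((X + A + B).card : ℝ) :=
        ihs (X + A)
      have c3 : ((X + A + B).card : ℝ) ≤ K * ((X + A).card : ℝ) := by
        rw [hB]
        exact key A Y hYA hY K hK X
      calc ((X + dil r A).card : ℝ) ≤ ((X + A + dil s B).card : ℝ) := c1
        _ ≤ K ^ (Nat.log 2 s) * ((X + A + B).card : ℝ) := c2
        _ ≤ K ^ (Nat.log 2 s) * (K * ((X + A).card : ℝ)) := by
            exact mul_le_mul_of_nonneg_left c3 (pow_nonneg hK0 _)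
        _ = K ^ (Nat.log 2 s + 1) * ((X + A).card : ℝ) := by
            rw [pow_succ]; ring
        _ = K ^ (Nat.log 2 r) * ((X + A).card : ℝ) := by rw [hlog]

end Stmt15Aux

theorem stmt_15 (G : Type*) [AddCommGroup G] (r : ℕ) (hr : 0 < r)
    (Y A : Set G) (hYA : Y ⊆ A) (hYfin : Y.Finite) (hAfin : A.Finite) (hYne : Y.Nonempty)
    (K : ℝ) (hK1 : 1 ≤ K)
    (hK : (Nat.card ↥(Y - A - (fun a : G => (2 : ℕ) • a) '' A) : ℝ) ≤ K * Nat.card Y) :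
    ∀ X : Set G, X.Finite →
      (Nat.card ↥(X + (fun a : G => r • a) '' A) : ℝ)
        ≤ K ^ (Nat.log 2 r) * (Nat.card ↥(X + A) : ℝ) := by
  classical
  intro X hX
  set FA : Finset G := hAfin.toFinset with hFA
  set FY : Finset G := hYfin.toFinset with hFY
  set FX : Finset G := hX.toFinset with hFX
  have hcA : (FA : Set G) = A := hAfin.coe_toFinset
  have hcY : (FY : Set G) = Y := hYfin.coe_toFinset
  have hcX : (FX : Set G) = X := hX.coe_toFinset
  have hYA' : FY ⊆ FA := by
    rw [← Finset.coe_subset, hcA, hcY]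
    exact hYA
  have hYne' : FY.Nonempty := by
    obtain ⟨y, hy⟩ := hYne
    exact ⟨y, by rw [hFY, Set.Finite.mem_toFinset]; exact hy⟩
  have ecard : ∀ F : Finset G, Nat.card ↥((F : Set G)) = F.card := by
    intro F
    rw [Nat.card_coe_set_eq, Set.ncard_coe_finset]
  have e1 : Y - A - (fun a : G => (2 : ℕ) • a) '' A
      = ((FY - FA - Stmt15Aux.dil 2 FA : Finset G) : Set G) := by
    rw [Finset.coe_sub, Finset.coe_sub, Stmt15Aux.dil, Finset.coe_image, hcA, hcY]
  have e2 : X + (fun a : G => r • a) '' A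
      = ((FX + Stmt15Aux.dil r FA : Finset G) : Set G) := by
    rw [Finset.coe_add, Stmt15Aux.dil, Finset.coe_image, hcA, hcX]
  have e3 : X + A = ((FX + FA : Finset G) : Set G) := by
    rw [Finset.coe_add, hcA, hcX]
  have e4 : Nat.card ↥Y = FY.card := by
    rw [← hcY, ecard]
  rw [e1, ecard] at hK
  rw [e4] at hK
  rw [e2, ecard, e3, ecard]
  exact Stmt15Aux.main r FA FY hYA' hYne' K hK hr FX
end

section
/- Let G be a finitely generated Abelian group, let Z, A ⊆ G be finite nonempty sets with Z chosen so that |Z − A − 2·A|/|Z| is minimal among nonempty subsets of a given set Y ⊆ A, and suppose |Z − A − 2·A| ≤ K|Z|. Then for every k ∈ N, |2^{k−1}·(Z − A − 2·A)| ≤ K |2^{k−1}·Z|. -/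
open Pointwise

-- counting lemma: |S + ker φ| = |φ '' S| * |ker φ|
lemma aux_card_add_ker {G : Type*} [AddCommGroup G] (φ : G →+ G) (S : Set G) :
    Nat.card ↥(S + (φ.ker : Set G)) = Nat.card ↥(φ '' S) * Nat.card ↥(φ.ker : Set G) := by
  classical
  have sec : ∀ y : ↥(φ '' S), {s : G // s ∈ S ∧ φ s = ↑y} := fun y =>
    ⟨y.2.choose, y.2.choose_spec.1, y.2.choose_spec.2⟩
  have hg : Function.Bijective (fun p : ↥(φ '' S) × ↥(φ.ker : Set G) =>
      (⟨(sec p.1).1 + ↑p.2, Set.add_mem_add (sec p.1).2.1 p.2.2⟩ : ↥(S + (φ.ker : Set G)))) := by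
    constructor
    · rintro ⟨y, c⟩ ⟨y', c'⟩ h
      have h1 : (sec y).1 + (c : G) = (sec y').1 + (c' : G) := congrArg Subtype.val h
      have h2 : (y : G) = (y' : G) := by
        have := congrArg φ h1
        simpa [map_add, (sec y).2.2, (sec y').2.2,
          AddMonoidHom.mem_ker.mp c.2, AddMonoidHom.mem_ker.mp c'.2] using this
      have hy : y = y' := Subtype.ext h2
      subst hy
      have : (c : G) = (c' : G) := by
        have := h1
        exact add_left_cancel this
      exact Prod.ext rfl (Subtype.ext this)
    · rintro ⟨x, hx⟩
      obtain ⟨s, hs, c, hc, rfl⟩ := Set.mem_add.mp hx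
      have hmem : φ (s + c) ∈ φ '' S :=
        ⟨s, hs, by simp [map_add, AddMonoidHom.mem_ker.mp hc]⟩
      set y : ↥(φ '' S) := ⟨φ (s + c), hmem⟩ with hy
      have hker : s + c - (sec y).1 ∈ (φ.ker : Set G) := by
        have : φ ((sec y).1) = φ (s + c) := (sec y).2.2
        simp [AddMonoidHom.mem_ker, map_sub, this]
      exact ⟨⟨y, ⟨s + c - (sec y).1, hker⟩⟩, Subtype.ext (add_sub_cancel _ _)⟩
  rw [← Nat.card_prod]
  exact (Nat.card_congr (Equiv.ofBijective _ hg)).symm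

lemma aux_ker_finite {G : Type*} [AddCommGroup G] (hfg : AddGroup.FG G) (m : ℕ) (hm : 0 < m)
    (φ : G →+ G) (hφ : ∀ x, φ x = m • x) : (φ.ker : Set G).Finite := by
  have hMF : Module.Finite ℤ G := Module.Finite.iff_addGroup_fg.mpr hfg
  have hN : IsNoetherian ℤ G := isNoetherian_of_isNoetherianRing_of_finite ℤ G
  have hsub : (AddSubgroup.toIntSubmodule φ.ker).FG := IsNoetherian.noetherian _
  have hMF' : Module.Finite ℤ ↥(AddSubgroup.toIntSubmodule φ.ker) :=
    Module.Finite.iff_fg.mpr hsub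
  have hfg' : AddGroup.FG ↥φ.ker := Module.Finite.iff_addGroup_fg.mp hMF'
  have htor : AddMonoid.IsTorsion ↥φ.ker := by
    intro x
    refine isOfFinAddOrder_iff_nsmul_eq_zero.mpr ⟨m, hm, ?_⟩
    ext
    have hx : φ (x : G) = 0 := x.2
    rw [hφ] at hx
    simpa using hx
  have : Finite ↥φ.ker := AddCommGroup.finite_of_fg_torsion _ htor
  exact (φ.ker : Set G).toFinite
open Pointwise

theorem stmt_16 (G : Type*) [AddCommGroup G] (hfg : AddGroup.FG G)
    (Y Z A : Set G) (hYA : Y ⊆ A) (hZY : Z ⊆ Y)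
    (hZfin : Z.Finite) (hAfin : A.Finite) (hZne : Z.Nonempty) (hAne : A.Nonempty)
    (hmin : ∀ W : Set G, W ⊆ Y → W.Nonempty →
      (Nat.card ↥(Z - A - (fun a : G => (2 : ℕ) • a) '' A) : ℝ) * Nat.card W
        ≤ (Nat.card ↥(W - A - (fun a : G => (2 : ℕ) • a) '' A) : ℝ) * Nat.card Z)
    (K : ℝ)
    (hK : (Nat.card ↥(Z - A - (fun a : G => (2 : ℕ) • a) '' A) : ℝ) ≤ K * Nat.card Z) :
    ∀ k : ℕ, 1 ≤ k →
      (Nat.card ↥((fun a : G => (2 ^ (k - 1) : ℕ) • a) ''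
          (Z - A - (fun a : G => (2 : ℕ) • a) '' A)) : ℝ)
        ≤ K * (Nat.card ↥((fun a : G => (2 ^ (k - 1) : ℕ) • a) '' Z) : ℝ) := by
  classical
  intro k hk
  set m : ℕ := 2 ^ (k - 1) with hm
  have hm0 : 0 < m := Nat.pow_pos (by norm_num)
  set φ : G →+ G :=
    { toFun := fun x => m • x, map_zero' := smul_zero m,
      map_add' := fun x y => smul_add m x y } with hφdef
  have hφ : ∀ x, φ x = m • x := fun _ => rfl
  have hφfun : (fun a : G => (2 ^ (k - 1) : ℕ) • a) = ⇑φ := rfl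
  have hkerfin : (φ.ker : Set G).Finite := aux_ker_finite hfg m hm0 φ hφ
  -- B set
  set Bset : Set G := -(A + (fun a : G => (2 : ℕ) • a) '' A) with hBset
  have hBfin : Bset.Finite := (hAfin.add (hAfin.image _)).neg
  have hsplit : ∀ S : Set G, S - A - (fun a : G => (2 : ℕ) • a) '' A = S + Bset := by
    intro S
    rw [hBset, sub_sub, sub_eq_add_neg]
  -- Finsets
  set Zf := hZfin.toFinset with hZf
  set Bf := hBfin.toFinset with hBf
  set Cf := hkerfin.toFinset with hCf
  have hcard : ∀ F : Finset G, Nat.card ↥(↑F : Set G) = F.card := fun F => by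
    rw [Nat.card_coe_set_eq, Set.ncard_coe_finset]
  have hZcoe : (↑Zf : Set G) = Z := hZfin.coe_toFinset
  have hBcoe : (↑Bf : Set G) = Bset := hBfin.coe_toFinset
  have hCcoe : (↑Cf : Set G) = (φ.ker : Set G) := hkerfin.coe_toFinset
  -- Petridis hypothesis
  have hpet : ∀ A' ⊆ Zf, (Zf + Bf).card * A'.card ≤ (A' + Bf).card * Zf.card := by
    intro A' hA'
    rcases A'.eq_empty_or_nonempty with rfl | hne
    · simp
    · have hWY : (↑A' : Set G) ⊆ Y := fun x hx => hZY (hZcoe ▸ (Finset.coe_subset.mpr hA') hx)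
      have := hmin ↑A' hWY (by exact_mod_cast hne)
      have hDW : (↑A' : Set G) - A - (fun a : G => (2 : ℕ) • a) '' A = ↑(A' + Bf) := by
        rw [hsplit, Finset.coe_add, hBcoe]
      have hDZ : Z - A - (fun a : G => (2 : ℕ) • a) '' A = ↑(Zf + Bf) := by
        rw [hsplit, Finset.coe_add, hZcoe, hBcoe]
      rw [hDZ, hDW, ← hZcoe] at this
      simp only [hcard] at this
      exact_mod_cast this
  have hPP := Finset.pluennecke_petridis_inequality_add Cf hpet
  -- convert hK
  have hDZ : Z - A - (fun a : G => (2 : ℕ) • a) '' A = ↑(Zf + Bf) := by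
    rw [hsplit, Finset.coe_add, hZcoe, hBcoe]
  have hK' : ((Zf + Bf).card : ℝ) ≤ K * (Zf.card : ℝ) := by
    rw [hDZ, hcard] at hK
    rwa [show (Nat.card ↥Z : ℝ) = (Zf.card : ℝ) by rw [← hZcoe, hcard]] at hK
  have hZpos : (0 : ℝ) < (Zf.card : ℝ) := by
    have : 0 < Zf.card := Finset.card_pos.mpr (by rw [← Finset.coe_nonempty, hZcoe]; exact hZne)
    exact_mod_cast this
  -- main chain: (Zf+Bf+Cf).card ≤ K * (Zf+Cf).card
  have hchain : ((Zf + Bf + Cf).card : ℝ) ≤ K * ((Zf + Cf).card : ℝ) := by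
    have h1 : ((Zf + Bf + Cf).card : ℝ) * (Zf.card : ℝ)
        ≤ ((Zf + Bf).card : ℝ) * ((Zf + Cf).card : ℝ) := by
      rw [add_comm Cf Zf, add_right_comm Zf Cf Bf] at hPP
      exact_mod_cast hPP
    have h2 : ((Zf + Bf).card : ℝ) * ((Zf + Cf).card : ℝ)
        ≤ (K * (Zf.card : ℝ)) * ((Zf + Cf).card : ℝ) :=
      mul_le_mul_of_nonneg_right hK' (Nat.cast_nonneg _)
    have h3 := h1.trans h2
    rw [show (K * (Zf.card : ℝ)) * ((Zf + Cf).card : ℝ)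
        = (K * ((Zf + Cf).card : ℝ)) * (Zf.card : ℝ) by ring] at h3
    exact le_of_mul_le_mul_right h3 hZpos
  -- kernel counting
  have hcount : ∀ S : Set G, ∀ hS : S.Finite,
      Nat.card ↥(S + (φ.ker : Set G)) = Nat.card ↥(φ '' S) * Nat.card ↥(φ.ker : Set G) :=
    fun S _ => aux_card_add_ker φ S
  set c : ℕ := Nat.card ↥(φ.ker : Set G) with hc
  have hcpos : 0 < c := by
    have : Finite ↥(φ.ker : Set G) := hkerfin.to_subtype
    exact Nat.card_pos
  have hD : Nat.card ↥(φ '' (Z - A - (fun a : G => (2 : ℕ) • a) '' A)) * c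
      = (Zf + Bf + Cf).card := by
    rw [← aux_card_add_ker φ _]
    rw [hDZ]
    rw [show (↑(Zf + Bf) : Set G) + (φ.ker : Set G) = ↑(Zf + Bf + Cf) by
      rw [← hCcoe, ← Finset.coe_add]]
    exact hcard _
  have hZk : Nat.card ↥(φ '' Z) * c = (Zf + Cf).card := by
    rw [← aux_card_add_ker φ Z]
    rw [show Z + (φ.ker : Set G) = ↑(Zf + Cf) by rw [← hCcoe, ← hZcoe, ← Finset.coe_add]]
    exact hcard _
  rw [hφfun]
  have hfin : ((Nat.card ↥(φ '' (Z - A - (fun a : G => (2 : ℕ) • a) '' A)) : ℝ) * (c : ℝ))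
      ≤ K * ((Nat.card ↥(φ '' Z) : ℝ) * (c : ℝ)) := by
    rw [show ((Nat.card ↥(φ '' (Z - A - (fun a : G => (2:ℕ) • a) '' A)) : ℝ) * (c : ℝ))
        = (((Zf + Bf + Cf).card : ℕ) : ℝ) by exact_mod_cast congrArg Nat.cast hD]
    rw [show ((Nat.card ↥(φ '' Z) : ℝ) * (c : ℝ)) = (((Zf + Cf).card : ℕ) : ℝ) by
      exact_mod_cast congrArg Nat.cast hZk]
    exact hchain
  have hcpos' : (0 : ℝ) < (c : ℝ) := by exact_mod_cast hcpos
  rw [show K * ((Nat.card ↥(φ '' Z) : ℝ) * (c : ℝ))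
      = (K * (Nat.card ↥(φ '' Z) : ℝ)) * (c : ℝ) by ring] at hfin
  exact le_of_mul_le_mul_right hfin hcpos'
end

section
/- For each natural number d, consider the group G = (Z/4Z)^d × Z and the sets A = (Z/4Z)^d × {0} ∪ {0}^d × {1,...,2^d} and B = {0,1}^d × {0} (where {0,1} ⊆ Z/4Z). Then |A| = 4^d + 2^d, |2·A| = 2·2^d, |A + B| = 2·4^d, and |2·A + 2·B| = 4^d + 2^d. Consequently |A+B|/|A| ≤ 2 while |2·A + 2·B|/|2·A| ≥ 2^{d−1}. -/
/-!
Both `A` and `2·A` consist of a full layer at height `0` plus a column over a set of heights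
avoiding `0`, and adding a set that lives at height `0` acts layer by layer. Adding `B` thickens
the column `{0}^d × I`, `I = [1, 2^d]`, to `{0,1}^d × I`, giving `|A + B| = 4^d + 2^d · 2^d`.
After doubling, both layers of `2·A` and the set `2·B` live in `2·(ℤ/4)^d = {0,2}^d = 2·{0,1}^d`,
a subgroup, so `2·A + 2·B = {0,2}^d × ({0} ∪ 2·I)` has `2^d + 2^d · 2^d` elements while
`|2·A| = 2 · 2^d`.
-/

open Pointwise Set

section LayeredSets

variable {G H : Type*}

lemma prod_zero_union_zero_prod_add_prod_zero [AddZeroClass G] [AddZeroClass H]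
    (s t : Set G) (I : Set H) :
    (s ×ˢ {0} ∪ {0} ×ˢ I) + t ×ˢ {0} = (s + t) ×ˢ {0} ∪ t ×ˢ I := by
  simp only [union_add, prod_add_prod_comm, singleton_add, add_singleton, add_zero, zero_add,
    image_id']

lemma image_nsmul_prod [AddMonoid G] [AddMonoid H] (n : ℕ) (s : Set G) (t : Set H) :
    (fun p : G × H => n • p) '' s ×ˢ t = ((n • ·) '' s) ×ˢ ((n • ·) '' t) :=
  smul_set_prod n s t

lemma image_nsmul_prod_zero_union_prod [AddMonoid G] [AddMonoid H] (n : ℕ) (s t : Set G)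
    (I : Set H) :
    (fun p : G × H => n • p) '' (s ×ˢ {0} ∪ t ×ˢ I) =
      ((n • ·) '' s) ×ˢ {0} ∪ ((n • ·) '' t) ×ˢ ((n • ·) '' I) := by
  simp only [image_union, image_nsmul_prod, image_singleton, nsmul_zero]

lemma ncard_prod_zero_union_prod [Zero H] [Finite G] {I : Set H} (hI : I.Finite) (h0 : 0 ∉ I)
    (s t : Set G) : (s ×ˢ {0} ∪ t ×ˢ I).ncard = s.ncard + t.ncard * I.ncard := by
  have hdisj : Disjoint (s ×ˢ {0}) (t ×ˢ I) :=
    disjoint_prod.mpr (Or.inr (disjoint_singleton_left.mpr h0))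
  rw [ncard_union_eq hdisj (toFinite _) ((toFinite t).prod hI), ncard_prod, ncard_prod,
    ncard_singleton, mul_one]

end LayeredSets

lemma image_nsmul_univ_add_self {M : Type*} [AddCommMonoid M] (n : ℕ) :
    (n • ·) '' (univ : Set M) + (n • ·) '' univ = (n • ·) '' univ := by
  rw [image_univ]
  exact AddSubmonoid.coe_add_self_eq (AddMonoidHom.mrange (nsmulAddMonoidHom n))

lemma ncard_univ_pi {ι α : Type*} [Fintype ι] (t : ι → Set α) :
    (univ.pi t).ncard = ∏ i, (t i).ncard := by
  simp only [← Nat.card_coe_set_eq, Nat.card_congr (Equiv.Set.univPi t), Nat.card_pi]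

lemma image_nsmul_univ_pi {ι : Type*} {α : ι → Type*} [∀ i, AddMonoid (α i)] (n : ℕ)
    (t : ∀ i, Set (α i)) : (n • ·) '' univ.pi t = univ.pi fun i ↦ (n • ·) '' t i :=
  smul_set_univ_pi n t

lemma ZMod.four_image_two_nsmul_univ : ((2 : ℕ) • ·) '' (univ : Set (ZMod 4)) = {0, 2} := by
  ext x
  simp only [mem_image, mem_univ, true_and, mem_insert_iff, mem_singleton_iff]
  revert x
  decide

lemma ZMod.four_image_two_nsmul_zero_one :
    ((2 : ℕ) • ·) '' ({0, 1} : Set (ZMod 4)) = {0, 2} := by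
  rw [image_pair]
  norm_num

section ZModFourPi

variable (d : ℕ)

lemma setOf_forall_eq_zero_or_eq_one_eq_pi :
    {x : Fin d → ZMod 4 | ∀ i, x i = 0 ∨ x i = 1} = univ.pi fun _ ↦ {0, 1} := by
  ext x
  simp

lemma image_two_nsmul_univ_eq_pi :
    ((2 : ℕ) • ·) '' (univ : Set (Fin d → ZMod 4)) = univ.pi fun _ ↦ {0, 2} := by
  rw [← pi_univ univ, image_nsmul_univ_pi, ZMod.four_image_two_nsmul_univ]

lemma image_two_nsmul_setOf_forall_eq_zero_or_eq_one :
    ((2 : ℕ) • ·) '' {x : Fin d → ZMod 4 | ∀ i, x i = 0 ∨ x i = 1} =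
      ((2 : ℕ) • ·) '' univ := by
  rw [setOf_forall_eq_zero_or_eq_one_eq_pi, image_nsmul_univ_pi, image_two_nsmul_univ_eq_pi,
    ZMod.four_image_two_nsmul_zero_one]

lemma ncard_setOf_forall_eq_zero_or_eq_one :
    {x : Fin d → ZMod 4 | ∀ i, x i = 0 ∨ x i = 1}.ncard = 2 ^ d := by
  rw [setOf_forall_eq_zero_or_eq_one_eq_pi, ncard_univ_pi, ncard_pair (by decide)]
  simp

lemma ncard_image_two_nsmul_univ :
    (((2 : ℕ) • ·) '' (univ : Set (Fin d → ZMod 4))).ncard = 2 ^ d := by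
  rw [image_two_nsmul_univ_eq_pi, ncard_univ_pi, ncard_pair (by decide)]
  simp

end ZModFourPi

lemma Int.ncard_Icc_one_two_pow (d : ℕ) : (Icc (1 : ℤ) (2 ^ d)).ncard = 2 ^ d := by
  rw [ncard_eq_toFinset_card', toFinset_Icc, Int.card_Icc, add_sub_cancel_right]
  exact_mod_cast Int.toNat_natCast (2 ^ d)

lemma Int.ncard_image_two_nsmul (s : Set ℤ) : (((2 : ℕ) • ·) '' s).ncard = s.ncard :=
  ncard_image_of_injective s (IsAddTorsionFree.nsmul_right_injective two_ne_zero)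

lemma Int.zero_notMem_image_two_nsmul_Icc_one (b : ℤ) :
    (0 : ℤ) ∉ ((2 : ℕ) • ·) '' Icc 1 b := by
  rintro ⟨x, ⟨hx1, -⟩, h⟩
  simp only [nsmul_eq_mul] at h
  omega

lemma four_pow_eq_two_pow_mul_two_pow {R : Type*} [CommSemiring R] (d : ℕ) :
    (4 : R) ^ d = 2 ^ d * 2 ^ d := by
  rw [← mul_pow]; norm_num

namespace DilateCounterexample

variable (d : ℕ)

def A : Set ((Fin d → ZMod 4) × ℤ) := univ ×ˢ {0} ∪ {0} ×ˢ Icc 1 (2 ^ d)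

def B : Set ((Fin d → ZMod 4) × ℤ) := {x | ∀ i, x i = 0 ∨ x i = 1} ×ˢ {0}

lemma ncard_univ_fin_zmod_four : (univ : Set (Fin d → ZMod 4)).ncard = 4 ^ d := by
  simp [ncard_univ]

lemma ncard_A : (A d).ncard = 4 ^ d + 2 ^ d := by
  rw [A, ncard_prod_zero_union_prod (finite_Icc _ _) (by simp), ncard_univ_fin_zmod_four,
    ncard_singleton, Int.ncard_Icc_one_two_pow, one_mul]

lemma ncard_A_add_B : (A d + B d).ncard = 2 * 4 ^ d := by
  rw [A, B, prod_zero_union_zero_prod_add_prod_zero, univ_add_of_zero_mem fun _ ↦ .inl rfl,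
    ncard_prod_zero_union_prod (finite_Icc _ _) (by simp), ncard_univ_fin_zmod_four,
    ncard_setOf_forall_eq_zero_or_eq_one, Int.ncard_Icc_one_two_pow,
    ← four_pow_eq_two_pow_mul_two_pow, two_mul]

lemma image_two_nsmul_A : (fun p ↦ (2 : ℕ) • p) '' A d =
    (((2 : ℕ) • ·) '' univ) ×ˢ {0} ∪ {0} ×ˢ (((2 : ℕ) • ·) '' Icc 1 (2 ^ d)) := by
  rw [A, image_nsmul_prod_zero_union_prod, image_singleton, nsmul_zero]

lemma ncard_image_two_nsmul_A : ((fun p ↦ (2 : ℕ) • p) '' A d).ncard = 2 * 2 ^ d := by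
  rw [image_two_nsmul_A,
    ncard_prod_zero_union_prod ((finite_Icc _ _).image _)
      (Int.zero_notMem_image_two_nsmul_Icc_one _),
    ncard_image_two_nsmul_univ, ncard_singleton, Int.ncard_image_two_nsmul,
    Int.ncard_Icc_one_two_pow, one_mul, two_mul]

lemma image_two_nsmul_A_add_image_two_nsmul_B :
    (fun p ↦ (2 : ℕ) • p) '' A d + (fun p ↦ (2 : ℕ) • p) '' B d =
      (((2 : ℕ) • ·) '' univ) ×ˢ {0} ∪
        (((2 : ℕ) • ·) '' univ) ×ˢ (((2 : ℕ) • ·) '' Icc 1 (2 ^ d)) := by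
  rw [image_two_nsmul_A, B, image_nsmul_prod, image_two_nsmul_setOf_forall_eq_zero_or_eq_one,
    image_singleton, nsmul_zero, prod_zero_union_zero_prod_add_prod_zero,
    image_nsmul_univ_add_self]

lemma ncard_image_two_nsmul_A_add_image_two_nsmul_B :
    ((fun p ↦ (2 : ℕ) • p) '' A d + (fun p ↦ (2 : ℕ) • p) '' B d).ncard = 4 ^ d + 2 ^ d := by
  rw [image_two_nsmul_A_add_image_two_nsmul_B,
    ncard_prod_zero_union_prod ((finite_Icc _ _).image _)
      (Int.zero_notMem_image_two_nsmul_Icc_one _),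
    ncard_image_two_nsmul_univ, Int.ncard_image_two_nsmul, Int.ncard_Icc_one_two_pow,
    four_pow_eq_two_pow_mul_two_pow, add_comm]

end DilateCounterexample

lemma two_mul_four_pow_div_le_two (d : ℕ) : (2 * 4 ^ d : ℝ) / (4 ^ d + 2 ^ d) ≤ 2 := by
  rw [div_le_iff₀ (by positivity)]
  nlinarith [pow_pos (two_pos : (0 : ℝ) < 2) d]

lemma two_zpow_sub_one_le_div (d : ℕ) :
    (2 : ℝ) ^ ((d : ℤ) - 1) ≤ (4 ^ d + 2 ^ d) / (2 * 2 ^ d) := by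
  rw [zpow_sub₀ two_ne_zero, zpow_natCast, zpow_one, div_le_div_iff₀ two_pos (by positivity)]
  rw [four_pow_eq_two_pow_mul_two_pow]
  nlinarith [pow_pos (two_pos : (0 : ℝ) < 2) d]

theorem stmt_17 (d : ℕ)
    (A B : Set ((Fin d → ZMod 4) × ℤ))
    (hA : A = (Set.univ : Set (Fin d → ZMod 4)) ×ˢ {(0 : ℤ)} ∪
        {(0 : Fin d → ZMod 4)} ×ˢ (Set.Icc (1 : ℤ) (2 ^ d)))
    (hB : B = {x : Fin d → ZMod 4 | ∀ i, x i = 0 ∨ x i = 1} ×ˢ {(0 : ℤ)}) :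
    Nat.card A = 4 ^ d + 2 ^ d ∧
    Nat.card ((fun p : (Fin d → ZMod 4) × ℤ => (2 : ℕ) • p) '' A) = 2 * 2 ^ d ∧
    Nat.card ↥(A + B) = 2 * 4 ^ d ∧
    Nat.card ↥((fun p : (Fin d → ZMod 4) × ℤ => (2 : ℕ) • p) '' A +
        (fun p : (Fin d → ZMod 4) × ℤ => (2 : ℕ) • p) '' B) = 4 ^ d + 2 ^ d ∧
    (Nat.card ↥(A + B) : ℝ) / (Nat.card A : ℝ) ≤ 2 ∧
    (2 : ℝ) ^ ((d : ℤ) - 1) ≤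
      (Nat.card ↥((fun p : (Fin d → ZMod 4) × ℤ => (2 : ℕ) • p) '' A +
          (fun p : (Fin d → ZMod 4) × ℤ => (2 : ℕ) • p) '' B) : ℝ) /
        (Nat.card ((fun p : (Fin d → ZMod 4) × ℤ => (2 : ℕ) • p) '' A) : ℝ) := by
  obtain rfl : A = DilateCounterexample.A d := hA
  obtain rfl : B = DilateCounterexample.B d := hB
  simp only [Nat.card_coe_set_eq]
  rw [DilateCounterexample.ncard_A, DilateCounterexample.ncard_image_two_nsmul_A,
    DilateCounterexample.ncard_A_add_B,
    DilateCounterexample.ncard_image_two_nsmul_A_add_image_two_nsmul_B]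
  refine ⟨rfl, rfl, rfl, rfl, ?_, ?_⟩ <;> push_cast
  exacts [two_mul_four_pow_div_le_two d, two_zpow_sub_one_le_div d]
end

section
/- Let G be an Abelian group and S ⊆ G a finite nonempty set with ⟨1_S ∗ 1_S, 1_S⟩ ≥ ε|S|², where 0 < ε ≤ 1. Then there exist a subset T ⊆ S and an element x₀ ∈ G such that x₀ − T = T, |T| = Ω(ε|S|), and |T − T| = O(ε^{−5}|S|), with absolute implied constants. -/
open Pointwise Finset

section BSGsym

variable {G : Type} [AddCommGroup G] [DecidableEq G]

private def Mset (A : Finset G) (x : G) : Finset G := A.filter fun a => x - a ∈ A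

private def codF (A : Finset G) (a b : G) : Finset G :=
  A.filter fun y => y - a ∈ A ∧ y - b ∈ A

private def repF (A : Finset G) (d : G) : Finset (G × G) :=
  (A ×ˢ A).filter fun pq => pq.1 - pq.2 = d

private lemma codF_comm (A : Finset G) (a b : G) : codF A a b = codF A b a := by
  unfold codF
  apply Finset.filter_congr
  intro y _
  tauto

private lemma codF_card_le_repF (A : Finset G) (a b : G) :
    (codF A a b).card ≤ (repF A (a - b)).card := by
  apply Finset.card_le_card_of_injOn (fun y => (y - b, y - a))
  · intro y hy
    simp only [codF, mem_filter, Finset.mem_coe] at hy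
    simp only [repF, mem_filter, mem_product, Finset.mem_coe]
    exact ⟨⟨hy.2.2, hy.2.1⟩, by abel⟩
  · intro y _ z _ h
    have h1 : y - b = z - b := congrArg Prod.fst h
    simpa using congrArg (· + b) h1

private lemma repF_neg_card (A : Finset G) (d : G) :
    (repF A (-d)).card = (repF A d).card := by
  apply Finset.card_nbij' (fun pq => (pq.2, pq.1)) (fun pq => (pq.2, pq.1))
  · intro pq hpq
    simp only [repF, mem_filter, mem_product, Finset.mem_coe] at hpq ⊢
    refine ⟨⟨hpq.1.2, hpq.1.1⟩, ?_⟩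
    rw [← neg_sub, hpq.2, neg_neg]
  · intro pq hpq
    simp only [repF, mem_filter, mem_product, Finset.mem_coe] at hpq ⊢
    refine ⟨⟨hpq.1.2, hpq.1.1⟩, ?_⟩
    rw [← neg_sub, hpq.2]
  · intro pq _; rfl
  · intro pq _; rfl

private def BadP (A : Finset G) (x₀ : G) (β : ℝ) (a b : G) : Prop :=
  ((codF A a b).card : ℝ) < β ∧ ((codF A (x₀ - a) (x₀ - b)).card : ℝ) < β

noncomputable instance (A : Finset G) (x₀ : G) (β : ℝ) (a b : G) : Decidable (BadP A x₀ β a b) :=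
  inferInstanceAs (Decidable (_ ∧ _))

private lemma BadP_comm (A : Finset G) (x₀ : G) (β : ℝ) (a b : G) :
    BadP A x₀ β a b ↔ BadP A x₀ β b a := by
  unfold BadP
  rw [codF_comm A a b, codF_comm A (x₀ - a) (x₀ - b)]

private lemma BadP_sigma (A : Finset G) (x₀ : G) (β : ℝ) (a b : G) :
    BadP A x₀ β (x₀ - a) (x₀ - b) ↔ BadP A x₀ β a b := by
  unfold BadP
  rw [sub_sub_cancel, sub_sub_cancel]
  exact and_comm

private lemma sum_card_filter_swap (A : Finset G) (B : Finset (G × G)) :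
    ∑ x ∈ A, (B.filter fun ab => x - ab.1 ∈ A ∧ x - ab.2 ∈ A).card
      = ∑ ab ∈ B, (codF A ab.1 ab.2).card := by
  simp only [Finset.card_filter, codF]
  rw [Finset.sum_comm]

private lemma card_pairs (A : Finset G) :
    ((A ×ˢ A).filter fun ab => ab.1 + ab.2 ∈ A).card = ∑ x ∈ A, (Mset A x).card := by
  have H : ∀ ab ∈ ((A ×ˢ A).filter fun ab : G × G => ab.1 + ab.2 ∈ A),
      (fun ab : G × G => ab.1 + ab.2) ab ∈ A := fun ab hab => (mem_filter.mp hab).2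
  rw [Finset.card_eq_sum_card_fiberwise H]
  refine Finset.sum_congr rfl fun x hx => ?_
  apply Finset.card_nbij' (fun ab => ab.1) (fun a => (a, x - a))
  · intro ab hab
    simp only [mem_filter, mem_product, Finset.mem_coe] at hab
    obtain ⟨⟨⟨h1, h2⟩, _⟩, h4⟩ := hab
    simp only [Mset, mem_filter, Finset.mem_coe]
    refine ⟨h1, ?_⟩
    rw [← h4, add_sub_cancel_left]
    exact h2
  · intro a ha
    simp only [Mset, mem_filter, Finset.mem_coe] at ha
    simp only [mem_filter, mem_product, Finset.mem_coe]
    refine ⟨⟨⟨ha.1, ha.2⟩, ?_⟩, ?_⟩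
    · rw [add_sub_cancel]; exact hx
    · rw [add_sub_cancel]
  · intro ab hab
    simp only [mem_filter, mem_product, Finset.mem_coe] at hab
    obtain ⟨_, h4⟩ := hab
    have h5 : x - ab.1 = ab.2 := by rw [← h4, add_sub_cancel_left]
    show (ab.1, x - ab.1) = ab
    rw [h5]
  · intro a _; rfl

set_option maxHeartbeats 2000000 in
private lemma bsg_main (A : Finset G) (hA : A.Nonempty) (ε : ℝ) (hε : 0 < ε) (hε1 : ε ≤ 1)
    (hyp : ε * (A.card : ℝ) ^ 2 ≤ ∑ x ∈ A, ((Mset A x).card : ℝ)) :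
    ∃ (T : Finset G) (x₀ : G), T ⊆ A ∧ T.image (fun t => x₀ - t) = T ∧
      1 / 2 * ε * (A.card : ℝ) ≤ (T.card : ℝ) ∧
      ((T - T).card : ℝ) ≤ 8192 * ε ^ (-5 : ℤ) * (A.card : ℝ) := by
  classical
  set N : ℝ := (A.card : ℝ) with hNdef
  have hN0 : 0 < N := by
    rw [hNdef]
    exact_mod_cast Finset.card_pos.mpr hA
  set δ : ℝ := ε ^ 2 / 64 with hδdef
  have hδ0 : 0 < δ := by positivity
  -- Cauchy–Schwarz
  have hCS : ε ^ 2 * N ^ 3 ≤ ∑ x ∈ A, ((Mset A x).card : ℝ) ^ 2 := by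
    have h1 : (∑ x ∈ A, ((Mset A x).card : ℝ)) ^ 2
        ≤ N * ∑ x ∈ A, ((Mset A x).card : ℝ) ^ 2 := by
      rw [hNdef]
      exact sq_sum_le_card_mul_sum_sq
    have h0 : 0 ≤ ε * N ^ 2 := by positivity
    have h2 : (ε * N ^ 2) ^ 2 ≤ (∑ x ∈ A, ((Mset A x).card : ℝ)) ^ 2 := by
      apply pow_le_pow_left₀ h0 hyp
    have h3 : ε ^ 2 * N ^ 3 * N ≤ (∑ x ∈ A, ((Mset A x).card : ℝ) ^ 2) * N := by
      nlinarith [h1, h2]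
    exact le_of_mul_le_mul_right h3 hN0
  -- bad pairs
  set Bd : Finset (G × G) :=
    (A ×ˢ A).filter (fun ab => ((codF A ab.1 ab.2).card : ℝ) < δ * N) with hBddef
  set badP : G → Finset (G × G) := fun x =>
    ((Mset A x) ×ˢ (Mset A x)).filter fun ab => BadP A x (δ * N) ab.1 ab.2 with hbadPdef
  have hbadP : ∀ x, (badP x).card
      ≤ (Bd.filter fun ab => x - ab.1 ∈ A ∧ x - ab.2 ∈ A).card := by
    intro x
    apply Finset.card_le_card
    intro ab hab
    simp only [hbadPdef, hBddef, BadP, Mset, mem_filter, mem_product] at hab ⊢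
    have h := Finset.mem_filter.mp hab
    have h1 := Finset.mem_product.mp h.1
    have h2 := Finset.mem_filter.mp h1.1
    have h3 := Finset.mem_filter.mp h1.2
    exact ⟨⟨⟨h2.1, h3.1⟩, h.2.1⟩, h2.2, h3.2⟩
  have hbadsum : ∑ x ∈ A, ((badP x).card : ℝ) ≤ δ * N ^ 3 := by
    have e1 : ∑ x ∈ A, ((Bd.filter fun ab => x - ab.1 ∈ A ∧ x - ab.2 ∈ A).card : ℝ)
        = ∑ ab ∈ Bd, ((codF A ab.1 ab.2).card : ℝ) := by
      have h := sum_card_filter_swap A Bd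
      rw [← Nat.cast_sum, ← Nat.cast_sum, h]
    calc ∑ x ∈ A, ((badP x).card : ℝ)
        ≤ ∑ x ∈ A, ((Bd.filter fun ab => x - ab.1 ∈ A ∧ x - ab.2 ∈ A).card : ℝ) := by
          apply Finset.sum_le_sum
          intro x _
          exact_mod_cast hbadP x
      _ = ∑ ab ∈ Bd, ((codF A ab.1 ab.2).card : ℝ) := e1
      _ ≤ ∑ ab ∈ Bd, (δ * N) := by
          apply Finset.sum_le_sum
          intro ab hab
          exact le_of_lt (mem_filter.mp hab).2
      _ = (Bd.card : ℝ) * (δ * N) := by rw [Finset.sum_const, nsmul_eq_mul]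
      _ ≤ N ^ 2 * (δ * N) := by
          have hb : Bd.card ≤ A.card * A.card := by
            calc Bd.card ≤ (A ×ˢ A).card := Finset.card_filter_le _ _
              _ = A.card * A.card := Finset.card_product _ _
          have h' : (Bd.card : ℝ) ≤ N ^ 2 := by
            rw [hNdef, sq]; exact_mod_cast hb
          exact mul_le_mul_of_nonneg_right h' (le_of_lt (mul_pos hδ0 hN0))
      _ = δ * N ^ 3 := by ring
  -- choose x₀
  have hkey : ∃ x₀ ∈ A,
      ε ^ 2 * N ^ 2 / 2 ≤ ((Mset A x₀).card : ℝ) ^ 2 - 32 * ((badP x₀).card : ℝ) := by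
    apply Finset.exists_le_of_sum_le hA
    have e2 : ∑ _x ∈ A, (ε ^ 2 * N ^ 2 / 2) = N * (ε ^ 2 * N ^ 2 / 2) := by
      rw [Finset.sum_const, nsmul_eq_mul]
    rw [e2, Finset.sum_sub_distrib, ← Finset.mul_sum]
    have : (32 : ℝ) * ∑ x ∈ A, ((badP x).card : ℝ) ≤ 32 * (δ * N ^ 3) := by linarith
    rw [hδdef] at this
    nlinarith [hCS]
  obtain ⟨x₀, hx₀A, hx₀⟩ := hkey
  set U : Finset G := Mset A x₀ with hUdef
  set u : ℝ := (U.card : ℝ) with hudef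
  have hu0' : 0 ≤ u := Nat.cast_nonneg _
  have hbadnn : (0:ℝ) ≤ 32 * ((badP x₀).card : ℝ) := by positivity
  have hu2 : ε ^ 2 * N ^ 2 / 2 + 32 * ((badP x₀).card : ℝ) ≤ u ^ 2 := by
    have := hx₀
    simp only [hUdef, hudef] at *
    linarith
  have hu : 2 / 3 * ε * N ≤ u := by
    nlinarith [hu2, hbadnn, sq_nonneg (u - 2 / 3 * ε * N), sq_nonneg (u + 2 / 3 * ε * N),
      mul_pos hε hN0]
  have hupos : 0 < u := lt_of_lt_of_le (by positivity) hu
  have h32 : 32 * ((badP x₀).card : ℝ) ≤ u ^ 2 := by nlinarith [hu2]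
  -- bad degree
  set baddeg : G → ℕ := fun a => (U.filter (fun b => BadP A x₀ (δ * N) a b)).card
    with hbaddegdef
  have hdegsum : ∑ a ∈ U, (baddeg a : ℝ) = ((badP x₀).card : ℝ) := by
    have : (badP x₀).card = ∑ a ∈ U, baddeg a := by
      simp only [hbadPdef, hbaddegdef, ← hUdef]
      rw [Finset.card_filter, Finset.sum_product]
      exact Finset.sum_congr rfl fun a _ => (Finset.card_filter _ _).symm
    rw [this]
    push_cast
    ring
  -- symmetric structure
  have hσU : ∀ a ∈ U, x₀ - a ∈ U := by
    intro a ha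
    simp only [hUdef, Mset, mem_filter] at ha ⊢
    exact ⟨ha.2, by rw [sub_sub_cancel]; exact ha.1⟩
  have hdegσ : ∀ a : G, baddeg (x₀ - a) = baddeg a := by
    intro a
    simp only [hbaddegdef]
    symm
    apply Finset.card_nbij' (fun b => x₀ - b) (fun b => x₀ - b)
    · intro b hb
      simp only [mem_filter, Finset.mem_coe] at hb ⊢
      exact ⟨hσU b hb.1, (BadP_sigma A x₀ (δ * N) a b).mpr hb.2⟩
    · intro b hb
      simp only [mem_filter, Finset.mem_coe] at hb ⊢
      refine ⟨hσU b hb.1, ?_⟩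
      have : BadP A x₀ (δ * N) (x₀ - a) (x₀ - (x₀ - b)) ↔ BadP A x₀ (δ * N) a (x₀ - b) :=
        BadP_sigma A x₀ (δ * N) a (x₀ - b)
      rw [sub_sub_cancel] at this
      exact this.mp hb.2
    · intro b _; exact sub_sub_cancel _ _
    · intro b _; exact sub_sub_cancel _ _
  set T : Finset G := U.filter (fun a => (baddeg a : ℝ) ≤ u / 8) with hTdef
  have hTU : T ⊆ U := Finset.filter_subset _ _
  have hUA : U ⊆ A := Finset.filter_subset _ _
  -- size of T
  have hcardUT : ((U \ T).card : ℝ) ≤ u / 4 := by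
    have h1 : ((U \ T).card : ℝ) * (u / 8) ≤ ∑ a ∈ U \ T, (baddeg a : ℝ) := by
      have := Finset.card_nsmul_le_sum (U \ T) (fun a => (baddeg a : ℝ)) (u / 8) ?_
      · rwa [nsmul_eq_mul] at this
      · intro a ha
        rw [Finset.mem_sdiff, hTdef, Finset.mem_filter] at ha
        have := ha.2
        push_neg at this
        exact le_of_lt (this ha.1)
    have h2 : ∑ a ∈ U \ T, (baddeg a : ℝ) ≤ ∑ a ∈ U, (baddeg a : ℝ) := by
      apply Finset.sum_le_sum_of_subset_of_nonneg (Finset.sdiff_subset)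
      intro a _ _
      positivity
    nlinarith [h1, h2, hdegsum, h32, hupos]
  have hTcard : 1 / 2 * ε * N ≤ (T.card : ℝ) := by
    have he : ((U \ T).card : ℝ) = u - (T.card : ℝ) := by
      rw [Finset.card_sdiff_of_subset hTU]
      have := Finset.card_le_card hTU
      push_cast [Nat.cast_sub this]
      ring
    linarith [hu, hcardUT]
  -- symmetry of T
  have hTσ : T.image (fun t => x₀ - t) = T := by
    have hsub : T.image (fun t => x₀ - t) ⊆ T := by
      intro y hy
      obtain ⟨t, ht, rfl⟩ := Finset.mem_image.mp hy
      rw [hTdef, Finset.mem_filter] at ht ⊢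
      exact ⟨hσU t ht.1, by rw [hdegσ]; exact ht.2⟩
    apply Finset.eq_of_subset_of_card_le hsub
    rw [Finset.card_image_of_injective _ sub_right_injective]
  -- representation counts
  have hrep : ∀ a c : G, ¬ BadP A x₀ (δ * N) a c → δ * N ≤ ((repF A (a - c)).card : ℝ) := by
    intro a c h
    rw [BadP, not_and_or] at h
    rcases h with h | h
    · push_neg at h
      calc δ * N ≤ ((codF A a c).card : ℝ) := h
        _ ≤ ((repF A (a - c)).card : ℝ) := by exact_mod_cast codF_card_le_repF A a c
    · push_neg at h
      have h2 : ((codF A (x₀ - a) (x₀ - c)).card : ℝ)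
          ≤ ((repF A ((x₀ - a) - (x₀ - c))).card : ℝ) := by
        exact_mod_cast codF_card_le_repF A (x₀ - a) (x₀ - c)
      have h3 : (x₀ - a) - (x₀ - c) = -(a - c) := by abel
      rw [h3] at h2
      rw [repF_neg_card] at h2
      linarith
  -- the quadruple sets
  set Qf : G → Finset ((G × G) × (G × G)) := fun d =>
    ((A ×ˢ A) ×ˢ (A ×ˢ A)).filter fun w => (w.1.1 - w.1.2) + (w.2.1 - w.2.2) = d with hQfdef
  set D : Finset G := T - T with hDdef
  have hQd : ∀ d ∈ D, (ε * N / 2) * (δ * N) ^ 2 ≤ ((Qf d).card : ℝ) := by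
    intro d hd
    rw [hDdef, Finset.mem_sub] at hd
    obtain ⟨a, ha, b, hb, hab⟩ := hd
    set Cab : Finset G := U.filter
      (fun c => ¬ BadP A x₀ (δ * N) a c ∧ ¬ BadP A x₀ (δ * N) b c) with hCabdef
    have hCab : ε * N / 2 ≤ (Cab.card : ℝ) := by
      have hsub : U ⊆ Cab ∪ (U.filter (fun c => BadP A x₀ (δ * N) a c))
          ∪ (U.filter (fun c => BadP A x₀ (δ * N) b c)) := by
        intro c hc
        simp only [hCabdef, Finset.mem_union, Finset.mem_filter]
        by_cases h1 : BadP A x₀ (δ * N) a c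
        · tauto
        · by_cases h2 : BadP A x₀ (δ * N) b c <;> tauto
      have hc1 : U.card ≤ Cab.card + baddeg a + baddeg b := by
        calc U.card ≤ (Cab ∪ (U.filter (fun c => BadP A x₀ (δ * N) a c))
              ∪ (U.filter (fun c => BadP A x₀ (δ * N) b c))).card := Finset.card_le_card hsub
          _ ≤ (Cab ∪ (U.filter (fun c => BadP A x₀ (δ * N) a c))).card
              + (U.filter (fun c => BadP A x₀ (δ * N) b c)).card := Finset.card_union_le _ _
          _ ≤ Cab.card + (U.filter (fun c => BadP A x₀ (δ * N) a c)).card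
              + (U.filter (fun c => BadP A x₀ (δ * N) b c)).card := by
                have := Finset.card_union_le Cab (U.filter (fun c => BadP A x₀ (δ * N) a c))
                omega
          _ = Cab.card + baddeg a + baddeg b := rfl
      have hdega : (baddeg a : ℝ) ≤ u / 8 := (Finset.mem_filter.mp ha).2
      have hdegb : (baddeg b : ℝ) ≤ u / 8 := (Finset.mem_filter.mp hb).2
      have hc1' : u ≤ (Cab.card : ℝ) + (baddeg a : ℝ) + (baddeg b : ℝ) := by
        rw [hudef]
        exact_mod_cast hc1
      linarith [hu]
    -- biUnion construction
    have hdisj : ∀ c ∈ Cab, ∀ c' ∈ Cab, c ≠ c' →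
        Disjoint (repF A (a - c) ×ˢ repF A (c - b)) (repF A (a - c') ×ˢ repF A (c' - b)) := by
      intro c _ c' _ hne
      rw [Finset.disjoint_left]
      rintro ⟨⟨p, q⟩, r, t⟩ hw hw'
      simp only [repF, Finset.mem_product, Finset.mem_filter] at hw hw'
      apply hne
      have h1 : a - c = a - c' := by rw [← hw.1.2, ← hw'.1.2]
      exact sub_right_injective h1
    have hsubQ : Cab.biUnion (fun c => repF A (a - c) ×ˢ repF A (c - b)) ⊆ Qf d := by
      rintro ⟨⟨p, q⟩, r, t⟩ hw
      rw [Finset.mem_biUnion] at hw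
      obtain ⟨c, _, hw⟩ := hw
      simp only [repF, Finset.mem_product, Finset.mem_filter] at hw
      simp only [hQfdef, Finset.mem_filter, Finset.mem_product]
      refine ⟨⟨hw.1.1, hw.2.1⟩, ?_⟩
      have e1 : p - q = a - c := hw.1.2
      have e2 : r - t = c - b := hw.2.2
      show p - q + (r - t) = d
      rw [e1, e2, ← hab]
      abel
    have hcount : ∑ c ∈ Cab, ((repF A (a - c)).card : ℝ) * ((repF A (c - b)).card : ℝ)
        ≤ ((Qf d).card : ℝ) := by
      have h1 : (Cab.biUnion (fun c => repF A (a - c) ×ˢ repF A (c - b))).card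
          = ∑ c ∈ Cab, ((repF A (a - c)).card * (repF A (c - b)).card) := by
        rw [Finset.card_biUnion hdisj]
        exact Finset.sum_congr rfl fun c _ => Finset.card_product _ _
      have h2 := Finset.card_le_card hsubQ
      rw [h1] at h2
      exact_mod_cast h2
    have hterm : ∀ c ∈ Cab,
        (δ * N) * (δ * N) ≤ ((repF A (a - c)).card : ℝ) * ((repF A (c - b)).card : ℝ) := by
      intro c hc
      rw [hCabdef, Finset.mem_filter] at hc
      have r1 := hrep a c hc.2.1
      have r2' := hrep b c hc.2.2
      have r2 : δ * N ≤ ((repF A (c - b)).card : ℝ) := by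
        have h3 : c - b = -(b - c) := by abel
        rw [h3, repF_neg_card]
        exact r2'
      exact mul_le_mul r1 r2 (le_of_lt (by positivity)) (Nat.cast_nonneg _)
    calc (ε * N / 2) * (δ * N) ^ 2
        ≤ (Cab.card : ℝ) * ((δ * N) * (δ * N)) := by nlinarith [hCab, hδ0, hN0]
      _ ≤ ∑ c ∈ Cab, ((repF A (a - c)).card : ℝ) * ((repF A (c - b)).card : ℝ) := by
          have := Finset.card_nsmul_le_sum Cab
            (fun c => ((repF A (a - c)).card : ℝ) * ((repF A (c - b)).card : ℝ))
            ((δ * N) * (δ * N)) hterm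
          rwa [nsmul_eq_mul] at this
      _ ≤ ((Qf d).card : ℝ) := hcount
  -- summing over D
  have hDQdisj : ∀ d ∈ D, ∀ d' ∈ D, d ≠ d' → Disjoint (Qf d) (Qf d') := by
    intro d _ d' _ hne
    rw [Finset.disjoint_left]
    intro w hw hw'
    simp only [hQfdef, Finset.mem_filter] at hw hw'
    exact hne (hw.2 ▸ hw'.2 ▸ rfl)
  have hsumD : ∑ d ∈ D, ((Qf d).card : ℝ) ≤ N ^ 4 := by
    have h1 : ∑ d ∈ D, (Qf d).card = (D.biUnion Qf).card := (Finset.card_biUnion hDQdisj).symm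
    have h2 : (D.biUnion Qf).card ≤ ((A ×ˢ A) ×ˢ (A ×ˢ A)).card := by
      apply Finset.card_le_card
      intro w hw
      rw [Finset.mem_biUnion] at hw
      obtain ⟨d, _, hw⟩ := hw
      exact Finset.mem_of_mem_filter _ hw
    have h3 : ((A ×ˢ A) ×ˢ (A ×ˢ A)).card = A.card ^ 4 := by
      simp [Finset.card_product]
      ring
    have : ∑ d ∈ D, (Qf d).card ≤ A.card ^ 4 := by omega
    calc ∑ d ∈ D, ((Qf d).card : ℝ) = ((∑ d ∈ D, (Qf d).card : ℕ) : ℝ) := by push_cast; ring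
      _ ≤ ((A.card ^ 4 : ℕ) : ℝ) := by exact_mod_cast this
      _ = N ^ 4 := by push_cast; ring
  have hfinal : (D.card : ℝ) * ((ε * N / 2) * (δ * N) ^ 2) ≤ N ^ 4 := by
    have h1 := Finset.card_nsmul_le_sum D (fun d => ((Qf d).card : ℝ))
      ((ε * N / 2) * (δ * N) ^ 2) hQd
    rw [nsmul_eq_mul] at h1
    linarith [hsumD]
  -- conclude
  have hε5 : (ε ^ (-5 : ℤ)) * ε ^ 5 = 1 := by
    rw [← zpow_natCast ε 5, ← zpow_add₀ (ne_of_gt hε)]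
    norm_num
  have hpos5 : (0:ℝ) < ε ^ (-5 : ℤ) := by positivity
  have h3 : (D.card : ℝ) * ε ^ 5 ≤ 8192 * N := by
    have hN3 : (0:ℝ) < N ^ 3 := by positivity
    have h4 : ((D.card : ℝ) * ε ^ 5) * N ^ 3 ≤ (8192 * N) * N ^ 3 := by
      rw [hδdef] at hfinal
      nlinarith [hfinal]
    exact le_of_mul_le_mul_right h4 hN3
  have hDbound : (D.card : ℝ) ≤ 8192 * ε ^ (-5 : ℤ) * N := by
    calc (D.card : ℝ) = ((D.card : ℝ) * ε ^ 5) * ε ^ (-5 : ℤ) := by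
          rw [mul_assoc, mul_comm (ε ^ 5), hε5, mul_one]
      _ ≤ (8192 * N) * ε ^ (-5 : ℤ) := mul_le_mul_of_nonneg_right h3 (le_of_lt hpos5)
      _ = 8192 * ε ^ (-5 : ℤ) * N := by ring
  exact ⟨T, x₀, hTU.trans hUA, hTσ, hTcard, hDbound⟩

end BSGsym

theorem stmt_18 :
    ∃ c C : ℝ, 0 < c ∧ 0 < C ∧
      ∀ (G : Type) [AddCommGroup G] (S : Set G), S.Finite → S.Nonempty →
        ∀ ε : ℝ, 0 < ε → ε ≤ 1 →
          ε * (Nat.card S : ℝ) ^ 2 ≤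
            (Nat.card {ab : G × G // ab.1 ∈ S ∧ ab.2 ∈ S ∧ ab.1 + ab.2 ∈ S} : ℝ) →
          ∃ (T : Set G) (x₀ : G), T ⊆ S ∧
            (fun t => x₀ - t) '' T = T ∧
            c * ε * (Nat.card S : ℝ) ≤ (Nat.card T : ℝ) ∧
            (Nat.card ↥(T - T) : ℝ) ≤ C * ε ^ (-5 : ℤ) * (Nat.card S : ℝ) := by
  classical
  refine ⟨1 / 2, 8192, by norm_num, by norm_num, ?_⟩
  intro G _ S hS hSne ε hε hε1 hyp
  classical
  set A : Finset G := hS.toFinset with hAdef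
  have hAco : (A : Set G) = S := hS.coe_toFinset
  have hAne : A.Nonempty := by
    rw [← Finset.coe_nonempty, hAco]
    exact hSne
  have hcardS : (Nat.card S : ℝ) = (A.card : ℝ) := by
    rw [Nat.card_coe_set_eq, Set.ncard_eq_toFinset_card S hS]
  have hhyp' : ε * (A.card : ℝ) ^ 2 ≤ ∑ x ∈ A, ((Mset A x).card : ℝ) := by
    have e1 : {ab : G × G | ab.1 ∈ S ∧ ab.2 ∈ S ∧ ab.1 + ab.2 ∈ S}
        = ((A ×ˢ A).filter fun ab => ab.1 + ab.2 ∈ A : Finset (G × G)) := by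
      ext ab
      simp only [Set.mem_setOf_eq, Finset.coe_filter, Finset.mem_product, Set.mem_setOf_eq,
        Finset.mem_coe, hAdef, Set.Finite.mem_toFinset]
      tauto
    have e2 : Nat.card {ab : G × G // ab.1 ∈ S ∧ ab.2 ∈ S ∧ ab.1 + ab.2 ∈ S}
        = ((A ×ˢ A).filter fun ab => ab.1 + ab.2 ∈ A).card := by
      show Nat.card ↥{ab : G × G | ab.1 ∈ S ∧ ab.2 ∈ S ∧ ab.1 + ab.2 ∈ S}
          = ((A ×ˢ A).filter fun ab => ab.1 + ab.2 ∈ A).card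
      rw [Nat.card_coe_set_eq, e1, Set.ncard_coe_finset]
    have e3 := card_pairs A
    rw [e2, e3] at hyp
    rw [hcardS] at hyp
    calc ε * (A.card : ℝ) ^ 2 ≤ ((∑ x ∈ A, (Mset A x).card : ℕ) : ℝ) := hyp
      _ = ∑ x ∈ A, ((Mset A x).card : ℝ) := by push_cast; ring
  obtain ⟨T, x₀, hTA, hTσ, hT1, hT2⟩ := bsg_main A hAne ε hε hε1 hhyp'
  refine ⟨(T : Set G), x₀, ?_, ?_, ?_, ?_⟩
  · rw [← hAco]
    exact_mod_cast Finset.coe_subset.mpr hTA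
  · rw [← Finset.coe_image]
    exact Finset.coe_inj.mpr hTσ
  · rw [hcardS, Nat.card_coe_set_eq, Set.ncard_coe_finset]
    exact hT1
  · have e4 : ((T : Set G) - (T : Set G)) = ((T - T : Finset G) : Set G) := by
      rw [Finset.coe_sub]
    rw [hcardS, e4, Nat.card_coe_set_eq, Set.ncard_coe_finset]
    exact hT2
end
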